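/- Von Neumann trace inequality for quaternionic matrices: for any A, B ∈ ℍ^{m×n}, Re tr(A*B) ≤ Σᵢ σᵢ(A)·σᵢ(B), where σᵢ(·) are the singular values in nonincreasing order. -/

import Mathlib

open Matrix Finset

section Helpers

lemma q_re_sum {ι : Type*} (s : Finset ι) (f : ι → Quaternion ℝ) :
    (∑ i ∈ s, f i).re = ∑ i ∈ s, (f i).re :=
  map_sum (QuaternionAlgebra.reₗ (-1 : ℝ) (0 : ℝ) (-1 : ℝ)) f s

lemma q_re_le_norm (x : Quaternion ℝ) : x.re ≤ ‖x‖ := by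
  have h1 : x.re ^ 2 ≤ Quaternion.normSq x := by
    rw [Quaternion.normSq_def']; nlinarith [sq_nonneg x.imI, sq_nonneg x.imJ, sq_nonneg x.imK]
  have h2 : Quaternion.normSq x = ‖x‖ * ‖x‖ := Quaternion.normSq_eq_norm_mul_self x
  nlinarith [norm_nonneg x, le_abs_self x.re, sq_abs x.re]

lemma q_coe_mul_re (r : ℝ) (x : Quaternion ℝ) : ((r : Quaternion ℝ) * x).re = r * x.re := by
  simp [Quaternion.re_mul]

lemma q_mul_coe_mul_re (p q : Quaternion ℝ) (r : ℝ) :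
    (p * ((r : Quaternion ℝ) * q)).re = r * (p * q).re := by
  rw [← mul_assoc, ← Quaternion.coe_commutes, mul_assoc, q_coe_mul_re]

lemma q_re_mul_comm (a b : Quaternion ℝ) : (a * b).re = (b * a).re := by
  simp [Quaternion.re_mul]; ring

lemma re_trace_mul_comm {p q : Type*} [Fintype p] [Fintype q]
    (X : Matrix p q (Quaternion ℝ)) (Y : Matrix q p (Quaternion ℝ)) :
    (Matrix.trace (X * Y)).re = (Matrix.trace (Y * X)).re := by
  simp only [Matrix.trace, Matrix.diag, Matrix.mul_apply, q_re_sum]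
  rw [Finset.sum_comm]
  exact Finset.sum_congr rfl fun i _ => Finset.sum_congr rfl fun j _ => q_re_mul_comm _ _

lemma fin_sum_ite {m : ℕ} (c : ℕ) (f : Fin m → Quaternion ℝ) :
    ∑ k : Fin m, (if (k : ℕ) = c then f k else 0) =
      if h : c < m then f ⟨c, h⟩ else 0 := by
  split_ifs with h
  · rw [show (fun k : Fin m => if (k:ℕ) = c then f k else 0)
        = fun k => if k = ⟨c,h⟩ then f k else 0 from funext fun k => by
      simp [Fin.ext_iff]]
    simp
  · apply Finset.sum_eq_zero
    intro k _
    rw [if_neg]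
    rintro rfl
    exact h k.isLt

lemma unit_row {p : ℕ} (P : Matrix (Fin p) (Fin p) (Quaternion ℝ)) (h : P * Pᴴ = 1)
    (j : Fin p) : ∑ l, ‖P j l‖ ^ 2 = 1 := by
  have h2 : (P * Pᴴ) j j = 1 := by rw [h, Matrix.one_apply_eq]
  rw [Matrix.mul_apply] at h2
  calc ∑ l, ‖P j l‖ ^ 2 = ∑ l, (P j l * Pᴴ l j).re := by
        apply Finset.sum_congr rfl; intro l _
        rw [Matrix.conjTranspose_apply, Quaternion.self_mul_star]
        simp [Quaternion.normSq_eq_norm_mul_self, sq]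
    _ = 1 := by rw [← q_re_sum, h2]; rfl

lemma unit_col {p : ℕ} (P : Matrix (Fin p) (Fin p) (Quaternion ℝ)) (h : Pᴴ * P = 1)
    (j : Fin p) : ∑ l, ‖P l j‖ ^ 2 = 1 := by
  have h2 : (Pᴴ * P) j j = 1 := by rw [h, Matrix.one_apply_eq]
  rw [Matrix.mul_apply] at h2
  calc ∑ l, ‖P l j‖ ^ 2 = ∑ l, (Pᴴ j l * P l j).re := by
        apply Finset.sum_congr rfl; intro l _
        rw [Matrix.conjTranspose_apply, Quaternion.star_mul_self]
        simp [Quaternion.normSq_eq_norm_mul_self, sq]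
    _ = 1 := by rw [← q_re_sum, h2]; rfl

lemma tel_sum (g : ℕ → ℝ) : ∀ N j, j < N →
    ∑ k ∈ Finset.Ico j N, (g k - g (k+1)) = g j - g N := by
  intro N
  induction N with
  | zero => intro j hj; omega
  | succ N ih =>
    intro j hj
    rcases Nat.lt_or_ge j N with h | h
    · rw [Finset.sum_Ico_succ_top (le_of_lt h), ih j h]; ring
    · have hjN : j = N := by omega
      subst hjN
      rw [show Finset.Ico j (j+1) = {j} from by
        rw [Finset.Ico_add_one_right_eq_Icc, Finset.Icc_self]]
      simp

lemma ico_filter (j N : ℕ) :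
    Finset.Ico j N = (Finset.range N).filter (fun k => j ≤ k) := by
  ext x; simp [Finset.mem_Ico, and_comm]

lemma count_le (c N : ℕ) (h : c < N) :
    ∑ i ∈ Finset.range N, (if i ≤ c then (1:ℝ) else 0) = (c : ℝ) + 1 := by
  rw [← Finset.sum_filter]
  rw [show (Finset.range N).filter (fun i => i ≤ c) = Finset.range (c+1) from by
    ext x; simp; omega]
  simp [Finset.sum_const]

lemma substochastic_sum_le (N : ℕ) (a b : ℕ → ℝ) (M : ℕ → ℕ → ℝ)
    (ha0 : ∀ i, 0 ≤ a i) (ha : Antitone a) (hb0 : ∀ i, 0 ≤ b i) (hb : Antitone b)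
    (hM0 : ∀ j i, 0 ≤ M j i)
    (hrow : ∀ j, j < N → ∑ i ∈ Finset.range N, M j i ≤ 1)
    (hcol : ∀ i, i < N → ∑ j ∈ Finset.range N, M j i ≤ 1) :
    ∑ j ∈ Finset.range N, ∑ i ∈ Finset.range N, a j * b i * M j i
      ≤ ∑ i ∈ Finset.range N, a i * b i := by
  classical
  set ah : ℕ → ℝ := fun k => if k < N then a k else 0 with hah
  set bh : ℕ → ℝ := fun k => if k < N then b k else 0 with hbh
  set α : ℕ → ℝ := fun k => ah k - ah (k+1) with hα
  set β : ℕ → ℝ := fun k => bh k - bh (k+1) with hβ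
  have hα0 : ∀ k, 0 ≤ α k := by
    intro k; simp only [hα, hah]
    split_ifs with h1 h2 h2
    · simpa using ha (Nat.le_succ k)
    · simpa using ha0 k
    · omega
    · simp
  have hβ0 : ∀ k, 0 ≤ β k := by
    intro k; simp only [hβ, hbh]
    split_ifs with h1 h2 h2
    · simpa using hb (Nat.le_succ k)
    · simpa using hb0 k
    · omega
    · simp
  have hA : ∀ j, j < N → a j = ∑ k ∈ Finset.range N, (if j ≤ k then α k else 0) := by
    intro j hj
    rw [← Finset.sum_filter, ← ico_filter, tel_sum ah N j hj]
    simp [hah, hj]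
  have hB : ∀ j, j < N → b j = ∑ k ∈ Finset.range N, (if j ≤ k then β k else 0) := by
    intro j hj
    rw [← Finset.sum_filter, ← ico_filter, tel_sum bh N j hj]
    simp [hbh, hj]
  set T : ℕ → ℕ → ℝ := fun k l => ∑ j ∈ Finset.range N, ∑ i ∈ Finset.range N,
    (if j ≤ k ∧ i ≤ l then M j i else 0) with hT
  set C : ℕ → ℕ → ℝ := fun k l => ∑ i ∈ Finset.range N,
    (if i ≤ k ∧ i ≤ l then (1:ℝ) else 0) with hC
  have key : ∀ k l, k < N → l < N → T k l ≤ C k l := by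
    intro k l hk hl
    have hCval : C k l = ((min k l : ℕ) : ℝ) + 1 := by
      simp only [hC]
      rw [show (fun i => if i ≤ k ∧ i ≤ l then (1:ℝ) else 0)
          = fun i => if i ≤ min k l then (1:ℝ) else 0 from funext fun i => by
        simp [le_min_iff]]
      exact count_le (min k l) N (lt_of_le_of_lt (min_le_left k l) hk)
    have hTk : T k l ≤ (k : ℝ) + 1 := by
      calc T k l ≤ ∑ j ∈ Finset.range N, (if j ≤ k then (1:ℝ) else 0) := by
            apply Finset.sum_le_sum
            intro j hj
            split_ifs with h
            · calc ∑ i ∈ Finset.range N, (if j ≤ k ∧ i ≤ l then M j i else 0)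
                  ≤ ∑ i ∈ Finset.range N, M j i := by
                    apply Finset.sum_le_sum; intro i _
                    split_ifs with h2
                    · exact le_refl _
                    · exact hM0 j i
                _ ≤ 1 := hrow j (Finset.mem_range.mp hj)
            · apply le_of_eq
              apply Finset.sum_eq_zero
              intro i _
              rw [if_neg]; tauto
        _ = (k : ℝ) + 1 := count_le k N hk
    have hTl : T k l ≤ (l : ℝ) + 1 := by
      simp only [hT]
      rw [Finset.sum_comm]
      calc ∑ i ∈ Finset.range N, ∑ j ∈ Finset.range N,
            (if j ≤ k ∧ i ≤ l then M j i else 0)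
          ≤ ∑ i ∈ Finset.range N, (if i ≤ l then (1:ℝ) else 0) := by
            apply Finset.sum_le_sum
            intro i hi
            split_ifs with h
            · calc ∑ j ∈ Finset.range N, (if j ≤ k ∧ i ≤ l then M j i else 0)
                  ≤ ∑ j ∈ Finset.range N, M j i := by
                    apply Finset.sum_le_sum; intro j _
                    split_ifs with h2
                    · exact le_refl _
                    · exact hM0 j i
                _ ≤ 1 := hcol i (Finset.mem_range.mp hi)
            · apply le_of_eq
              apply Finset.sum_eq_zero
              intro j _
              rw [if_neg]; tauto
        _ = (l : ℝ) + 1 := count_le l N hl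
    rw [hCval]
    rcases le_total k l with h | h
    · calc T k l ≤ (k:ℝ) + 1 := hTk
        _ = ((min k l : ℕ) : ℝ) + 1 := by rw [min_eq_left h]
    · calc T k l ≤ (l:ℝ) + 1 := hTl
        _ = ((min k l : ℕ) : ℝ) + 1 := by rw [min_eq_right h]
  have hLHS : ∑ j ∈ Finset.range N, ∑ i ∈ Finset.range N, a j * b i * M j i
      = ∑ k ∈ Finset.range N, ∑ l ∈ Finset.range N, α k * β l * T k l := by
    have step1 : ∑ j ∈ Finset.range N, ∑ i ∈ Finset.range N, a j * b i * M j i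
        = ∑ j ∈ Finset.range N, ∑ i ∈ Finset.range N, ∑ k ∈ Finset.range N,
            ∑ l ∈ Finset.range N,
            ((if j ≤ k then α k else 0) * (if i ≤ l then β l else 0) * M j i) := by
      apply Finset.sum_congr rfl; intro j hj
      apply Finset.sum_congr rfl; intro i hi
      rw [hA j (Finset.mem_range.mp hj), hB i (Finset.mem_range.mp hi),
        Finset.sum_mul_sum]
      rw [Finset.sum_mul]
      apply Finset.sum_congr rfl; intro k _
      rw [Finset.sum_mul]
    rw [step1]
    rw [Finset.sum_congr rfl fun j _ => Finset.sum_comm]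
    rw [Finset.sum_comm]
    rw [Finset.sum_congr rfl fun k _ => Finset.sum_congr rfl fun j _ => Finset.sum_comm]
    rw [Finset.sum_congr rfl fun k _ => Finset.sum_comm]
    apply Finset.sum_congr rfl; intro k _
    apply Finset.sum_congr rfl; intro l _
    simp only [hT]
    rw [Finset.mul_sum]
    apply Finset.sum_congr rfl; intro j _
    rw [Finset.mul_sum]
    apply Finset.sum_congr rfl; intro i _
    by_cases h1 : j ≤ k <;> by_cases h2 : i ≤ l <;> simp [h1, h2] <;> ring
  have hRHS : ∑ i ∈ Finset.range N, a i * b i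
      = ∑ k ∈ Finset.range N, ∑ l ∈ Finset.range N, α k * β l * C k l := by
    have step1 : ∑ i ∈ Finset.range N, a i * b i
        = ∑ i ∈ Finset.range N, ∑ k ∈ Finset.range N, ∑ l ∈ Finset.range N,
            ((if i ≤ k then α k else 0) * (if i ≤ l then β l else 0)) := by
      apply Finset.sum_congr rfl; intro i hi
      rw [hA i (Finset.mem_range.mp hi), hB i (Finset.mem_range.mp hi),
        Finset.sum_mul_sum]
    rw [step1, Finset.sum_comm]
    rw [Finset.sum_congr rfl fun k _ => Finset.sum_comm]
    apply Finset.sum_congr rfl; intro k _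
    apply Finset.sum_congr rfl; intro l _
    simp only [hC]
    rw [Finset.mul_sum]
    apply Finset.sum_congr rfl; intro i _
    by_cases h1 : i ≤ k <;> by_cases h2 : i ≤ l <;> simp [h1, h2] <;> ring
  rw [hLHS, hRHS]
  apply Finset.sum_le_sum; intro k hk
  apply Finset.sum_le_sum; intro l hl
  exact mul_le_mul_of_nonneg_left
    (key k l (Finset.mem_range.mp hk) (Finset.mem_range.mp hl))
    (mul_nonneg (hα0 k) (hβ0 l))

end Helpers

/-- The `m × n` "diagonal" matrix with real diagonal entries `σ 0, σ 1, ...`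
(embedded in the quaternions). -/
noncomputable def qdiag (m n : ℕ) (σ : ℕ → ℝ) :
    Matrix (Fin m) (Fin n) (Quaternion ℝ) :=
  Matrix.of fun i j => if (i : ℕ) = (j : ℕ) then ((σ (i : ℕ) : ℝ) : Quaternion ℝ) else 0

section Helpers2

noncomputable def rfun {m n : ℕ} (P : Matrix (Fin m) (Fin m) (Quaternion ℝ))
    (Q : Matrix (Fin n) (Fin n) (Quaternion ℝ)) (j l : ℕ) : ℝ :=
  if h : j < m ∧ j < n ∧ l < m ∧ l < n then
    (P ⟨j, h.1⟩ ⟨l, h.2.2.1⟩ * Q ⟨l, h.2.2.2⟩ ⟨j, h.2.1⟩).re else 0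

noncomputable def mfun {m n : ℕ} (P : Matrix (Fin m) (Fin m) (Quaternion ℝ))
    (Q : Matrix (Fin n) (Fin n) (Quaternion ℝ)) (j l : ℕ) : ℝ :=
  if h : j < m ∧ j < n ∧ l < m ∧ l < n then
    ‖P ⟨j, h.1⟩ ⟨l, h.2.2.1⟩‖ * ‖Q ⟨l, h.2.2.2⟩ ⟨j, h.2.1⟩‖ else 0

lemma r_le_m {m n : ℕ} (P : Matrix (Fin m) (Fin m) (Quaternion ℝ))
    (Q : Matrix (Fin n) (Fin n) (Quaternion ℝ)) (j l : ℕ) :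
    rfun P Q j l ≤ mfun P Q j l := by
  unfold rfun mfun
  split_ifs with h
  · calc (P ⟨j, h.1⟩ ⟨l, h.2.2.1⟩ * Q ⟨l, h.2.2.2⟩ ⟨j, h.2.1⟩).re
        ≤ ‖P ⟨j, h.1⟩ ⟨l, h.2.2.1⟩ * Q ⟨l, h.2.2.2⟩ ⟨j, h.2.1⟩‖ := q_re_le_norm _
      _ = _ := norm_mul _ _
  · exact le_refl 0

lemma m_nonneg {m n : ℕ} (P : Matrix (Fin m) (Fin m) (Quaternion ℝ))
    (Q : Matrix (Fin n) (Fin n) (Quaternion ℝ)) (j l : ℕ) : 0 ≤ mfun P Q j l := by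
  unfold mfun
  split_ifs with h
  · exact mul_nonneg (norm_nonneg _) (norm_nonneg _)
  · exact le_refl 0

lemma row_bound {m n : ℕ} (P : Matrix (Fin m) (Fin m) (Quaternion ℝ))
    (Q : Matrix (Fin n) (Fin n) (Quaternion ℝ)) (hP : P * Pᴴ = 1) (hQ : Qᴴ * Q = 1)
    (j : ℕ) (hj : j < min m n) :
    ∑ l ∈ Finset.range (min m n), mfun P Q j l ≤ 1 := by
  have hjm : j < m := lt_of_lt_of_le hj (Nat.min_le_left m n)
  have hjn : j < n := lt_of_lt_of_le hj (Nat.min_le_right m n)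
  set u : ℕ → ℝ := fun l => if h : l < m then ‖P ⟨j, hjm⟩ ⟨l, h⟩‖ else 0 with hu
  set v : ℕ → ℝ := fun l => if h : l < n then ‖Q ⟨l, h⟩ ⟨j, hjn⟩‖ else 0 with hv
  have hs : ∀ l ∈ Finset.range (min m n), mfun P Q j l = u l * v l := by
    intro l hl
    rw [Finset.mem_range] at hl
    have hlm : l < m := lt_of_lt_of_le hl (Nat.min_le_left m n)
    have hln : l < n := lt_of_lt_of_le hl (Nat.min_le_right m n)
    unfold mfun
    rw [dif_pos ⟨hjm, hjn, hlm, hln⟩]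
    simp only [hu, hv, dif_pos hlm, dif_pos hln]
  rw [Finset.sum_congr rfl hs]
  have hu1 : ∑ l ∈ Finset.range (min m n), u l ^ 2 ≤ 1 := by
    calc ∑ l ∈ Finset.range (min m n), u l ^ 2 ≤ ∑ l ∈ Finset.range m, u l ^ 2 :=
          Finset.sum_le_sum_of_subset_of_nonneg
            (Finset.range_subset_range.mpr (Nat.min_le_left m n)) (fun _ _ _ => sq_nonneg _)
      _ = ∑ l : Fin m, u (l : ℕ) ^ 2 := (Fin.sum_univ_eq_sum_range (fun l => u l ^ 2) m).symm
      _ = ∑ l : Fin m, ‖P ⟨j, hjm⟩ l‖ ^ 2 := by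
          apply Finset.sum_congr rfl; intro l _
          simp [hu, l.isLt]
      _ = 1 := unit_row P hP _
  have hv1 : ∑ l ∈ Finset.range (min m n), v l ^ 2 ≤ 1 := by
    calc ∑ l ∈ Finset.range (min m n), v l ^ 2 ≤ ∑ l ∈ Finset.range n, v l ^ 2 :=
          Finset.sum_le_sum_of_subset_of_nonneg
            (Finset.range_subset_range.mpr (Nat.min_le_right m n)) (fun _ _ _ => sq_nonneg _)
      _ = ∑ l : Fin n, v (l : ℕ) ^ 2 := (Fin.sum_univ_eq_sum_range (fun l => v l ^ 2) n).symm
      _ = ∑ l : Fin n, ‖Q l ⟨j, hjn⟩‖ ^ 2 := by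
          apply Finset.sum_congr rfl; intro l _
          simp [hv, l.isLt]
      _ = 1 := unit_col Q hQ _
  have cs := Finset.sum_mul_sq_le_sq_mul_sq (Finset.range (min m n)) u v
  have hnn : 0 ≤ ∑ l ∈ Finset.range (min m n), u l * v l := by
    apply Finset.sum_nonneg
    intro l _
    apply mul_nonneg
    · simp only [hu]; split_ifs; exacts [norm_nonneg _, le_refl 0]
    · simp only [hv]; split_ifs; exacts [norm_nonneg _, le_refl 0]
  nlinarith [Finset.sum_nonneg (fun l (_ : l ∈ Finset.range (min m n)) => sq_nonneg (u l)),
    Finset.sum_nonneg (fun l (_ : l ∈ Finset.range (min m n)) => sq_nonneg (v l))]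

lemma col_bound {m n : ℕ} (P : Matrix (Fin m) (Fin m) (Quaternion ℝ))
    (Q : Matrix (Fin n) (Fin n) (Quaternion ℝ)) (hP : Pᴴ * P = 1) (hQ : Q * Qᴴ = 1)
    (l : ℕ) (hl : l < min m n) :
    ∑ j ∈ Finset.range (min m n), mfun P Q j l ≤ 1 := by
  have hlm : l < m := lt_of_lt_of_le hl (Nat.min_le_left m n)
  have hln : l < n := lt_of_lt_of_le hl (Nat.min_le_right m n)
  set u : ℕ → ℝ := fun j => if h : j < m then ‖P ⟨j, h⟩ ⟨l, hlm⟩‖ else 0 with hu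
  set v : ℕ → ℝ := fun j => if h : j < n then ‖Q ⟨l, hln⟩ ⟨j, h⟩‖ else 0 with hv
  have hs : ∀ j ∈ Finset.range (min m n), mfun P Q j l = u j * v j := by
    intro j hj
    rw [Finset.mem_range] at hj
    have hjm : j < m := lt_of_lt_of_le hj (Nat.min_le_left m n)
    have hjn : j < n := lt_of_lt_of_le hj (Nat.min_le_right m n)
    unfold mfun
    rw [dif_pos ⟨hjm, hjn, hlm, hln⟩]
    simp only [hu, hv, dif_pos hjm, dif_pos hjn]
  rw [Finset.sum_congr rfl hs]
  have hu1 : ∑ j ∈ Finset.range (min m n), u j ^ 2 ≤ 1 := by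
    calc ∑ j ∈ Finset.range (min m n), u j ^ 2 ≤ ∑ j ∈ Finset.range m, u j ^ 2 :=
          Finset.sum_le_sum_of_subset_of_nonneg
            (Finset.range_subset_range.mpr (Nat.min_le_left m n)) (fun _ _ _ => sq_nonneg _)
      _ = ∑ j : Fin m, u (j : ℕ) ^ 2 := (Fin.sum_univ_eq_sum_range (fun j => u j ^ 2) m).symm
      _ = ∑ j : Fin m, ‖P j ⟨l, hlm⟩‖ ^ 2 := by
          apply Finset.sum_congr rfl; intro j _
          simp [hu, j.isLt]
      _ = 1 := unit_col P hP _
  have hv1 : ∑ j ∈ Finset.range (min m n), v j ^ 2 ≤ 1 := by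
    calc ∑ j ∈ Finset.range (min m n), v j ^ 2 ≤ ∑ j ∈ Finset.range n, v j ^ 2 :=
          Finset.sum_le_sum_of_subset_of_nonneg
            (Finset.range_subset_range.mpr (Nat.min_le_right m n)) (fun _ _ _ => sq_nonneg _)
      _ = ∑ j : Fin n, v (j : ℕ) ^ 2 := (Fin.sum_univ_eq_sum_range (fun j => v j ^ 2) n).symm
      _ = ∑ j : Fin n, ‖Q ⟨l, hln⟩ j‖ ^ 2 := by
          apply Finset.sum_congr rfl; intro j _
          simp [hv, j.isLt]
      _ = 1 := unit_row Q hQ _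
  have cs := Finset.sum_mul_sq_le_sq_mul_sq (Finset.range (min m n)) u v
  have hnn : 0 ≤ ∑ j ∈ Finset.range (min m n), u j * v j := by
    apply Finset.sum_nonneg
    intro j _
    apply mul_nonneg
    · simp only [hu]; split_ifs; exacts [norm_nonneg _, le_refl 0]
    · simp only [hv]; split_ifs; exacts [norm_nonneg _, le_refl 0]
  nlinarith [Finset.sum_nonneg (fun j (_ : j ∈ Finset.range (min m n)) => sq_nonneg (u j)),
    Finset.sum_nonneg (fun j (_ : j ∈ Finset.range (min m n)) => sq_nonneg (v j))]

end Helpers2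

/-- Von Neumann trace inequality for quaternionic matrices: if `A = Uₐ Σₐ Vₐ*` and
`B = V_b Σ_b V_b*` are quaternionic SVDs with singular values `σₐ, σ_b` nonnegative
and in nonincreasing order, then `Re tr(A* B) ≤ Σᵢ σₐ(i) σ_b(i)`. -/
theorem quaternion_von_neumann_trace_inequality {m n : ℕ}
    (A B : Matrix (Fin m) (Fin n) (Quaternion ℝ))
    (Ua : Matrix (Fin m) (Fin m) (Quaternion ℝ))
    (Va : Matrix (Fin n) (Fin n) (Quaternion ℝ))
    (Ub : Matrix (Fin m) (Fin m) (Quaternion ℝ))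
    (Vb : Matrix (Fin n) (Fin n) (Quaternion ℝ))
    (σa σb : ℕ → ℝ)
    (hUa : Ua * Uaᴴ = 1 ∧ Uaᴴ * Ua = 1) (hVa : Va * Vaᴴ = 1 ∧ Vaᴴ * Va = 1)
    (hUb : Ub * Ubᴴ = 1 ∧ Ubᴴ * Ub = 1) (hVb : Vb * Vbᴴ = 1 ∧ Vbᴴ * Vb = 1)
    (hσa0 : ∀ i, 0 ≤ σa i) (hσa : Antitone σa)
    (hσb0 : ∀ i, 0 ≤ σb i) (hσb : Antitone σb)
    (hA : A = Ua * qdiag m n σa * Vaᴴ)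
    (hB : B = Ub * qdiag m n σb * Vbᴴ) :
    (Matrix.trace (Aᴴ * B)).re ≤ ∑ i ∈ Finset.range (min m n), σa i * σb i := by
  have hP1 : (Uaᴴ * Ub) * (Uaᴴ * Ub)ᴴ = 1 := by
    rw [conjTranspose_mul, conjTranspose_conjTranspose, Matrix.mul_assoc,
      ← Matrix.mul_assoc Ub, hUb.1, Matrix.one_mul, hUa.2]
  have hP2 : (Uaᴴ * Ub)ᴴ * (Uaᴴ * Ub) = 1 := by
    rw [conjTranspose_mul, conjTranspose_conjTranspose, Matrix.mul_assoc,
      ← Matrix.mul_assoc Ua, hUa.1, Matrix.one_mul, hUb.2]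
  have hQ1 : (Vbᴴ * Va) * (Vbᴴ * Va)ᴴ = 1 := by
    rw [conjTranspose_mul, conjTranspose_conjTranspose, Matrix.mul_assoc,
      ← Matrix.mul_assoc Va, hVa.1, Matrix.one_mul, hVb.2]
  have hQ2 : (Vbᴴ * Va)ᴴ * (Vbᴴ * Va) = 1 := by
    rw [conjTranspose_mul, conjTranspose_conjTranspose, Matrix.mul_assoc,
      ← Matrix.mul_assoc Vb, hVb.1, Matrix.one_mul, hVa.2]
  set N := min m n with hN
  set Da := qdiag m n σa with hDa
  set Db := qdiag m n σb with hDb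
  have hTr : (Matrix.trace (Aᴴ * B)).re =
      ∑ j ∈ Finset.range N, ∑ l ∈ Finset.range N,
        σa j * σb l * rfun (Uaᴴ * Ub) (Vbᴴ * Va) j l := by
    have hprod : Aᴴ * B = Va * (Daᴴ * (Uaᴴ * (Ub * (Db * Vbᴴ)))) := by
      rw [hA, hB]
      simp only [conjTranspose_mul, conjTranspose_conjTranspose, Matrix.mul_assoc]
    have hcyc : (Matrix.trace (Aᴴ * B)).re
        = (Matrix.trace (Daᴴ * ((Uaᴴ * Ub) * (Db * (Vbᴴ * Va))))).re := by
      rw [hprod, re_trace_mul_comm]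
      congr 2
      simp only [Matrix.mul_assoc]
      rfl
    rw [hcyc]
    have hDbQ : ∀ (l : Fin m) (j : Fin n), (Db * (Vbᴴ * Va)) l j
        = if h : (l : ℕ) < n then ((σb (l : ℕ) : ℝ) : Quaternion ℝ) * (Vbᴴ * Va) ⟨(l:ℕ), h⟩ j
          else 0 := by
      intro l j
      rw [Matrix.mul_apply,
        ← fin_sum_ite (m := n) (l : ℕ)
          (fun t => ((σb (l:ℕ) : ℝ) : Quaternion ℝ) * (Vbᴴ * Va) t j)]
      apply Finset.sum_congr rfl
      intro t _
      by_cases h : (l : ℕ) = (t : ℕ)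
      · simp [hDb, qdiag, h]
      · simp [hDb, qdiag, h, Ne.symm h]
    have hE : ∀ j : Fin n, ((Daᴴ * ((Uaᴴ * Ub) * (Db * (Vbᴴ * Va)))) j j).re
        = ∑ l : Fin m, σa (j : ℕ) * σb (l : ℕ) * rfun (Uaᴴ * Ub) (Vbᴴ * Va) (j:ℕ) (l:ℕ) := by
      intro j
      rw [Matrix.mul_apply]
      have step : ∀ k : Fin m, Daᴴ j k * ((Uaᴴ * Ub) * (Db * (Vbᴴ * Va))) k j
          = if (k : ℕ) = (j : ℕ) then
              ((σa (k:ℕ) : ℝ) : Quaternion ℝ) * ((Uaᴴ * Ub) * (Db * (Vbᴴ * Va))) k j else 0 := by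
        intro k
        rw [Matrix.conjTranspose_apply, hDa]
        by_cases h : (k : ℕ) = (j : ℕ)
        · simp [qdiag, h]
        · simp [qdiag, h]
      rw [Finset.sum_congr rfl fun k _ => step k, fin_sum_ite]
      by_cases hj : (j : ℕ) < m
      · rw [dif_pos hj, q_coe_mul_re, Matrix.mul_apply, q_re_sum, Finset.mul_sum]
        apply Finset.sum_congr rfl
        intro l _
        rw [hDbQ l j]
        by_cases hl : (l : ℕ) < n
        · rw [dif_pos hl, q_mul_coe_mul_re, rfun,
            dif_pos ⟨hj, j.isLt, l.isLt, hl⟩]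
          simp only [Fin.eta]
          ring
        · rw [dif_neg hl, rfun, dif_neg (by tauto)]
          simp
          exact Or.inr rfl
      · rw [dif_neg hj]
        symm
        apply Finset.sum_eq_zero
        intro l _
        rw [rfun, dif_neg (by tauto)]
        simp
    have htr2 : (Matrix.trace (Daᴴ * ((Uaᴴ * Ub) * (Db * (Vbᴴ * Va))))).re
        = ∑ j ∈ Finset.range n, ∑ l ∈ Finset.range m,
            σa j * σb l * rfun (Uaᴴ * Ub) (Vbᴴ * Va) j l := by
      rw [Matrix.trace, q_re_sum]
      simp only [Matrix.diag_apply]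
      rw [Finset.sum_congr rfl fun j _ => hE j]
      rw [← Fin.sum_univ_eq_sum_range
        (fun j => ∑ l ∈ Finset.range m, σa j * σb l * rfun (Uaᴴ * Ub) (Vbᴴ * Va) j l) n]
      apply Finset.sum_congr rfl
      intro j _
      exact Fin.sum_univ_eq_sum_range
        (fun l => σa (j:ℕ) * σb l * rfun (Uaᴴ * Ub) (Vbᴴ * Va) (j:ℕ) l) m
    rw [htr2]
    have hrzero : ∀ j l : ℕ, ¬ (j < m ∧ j < n ∧ l < m ∧ l < n) →
        rfun (Uaᴴ * Ub) (Vbᴴ * Va) j l = 0 := fun j l h => dif_neg h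
    rw [show Finset.range n = Finset.range N ∪ (Finset.range n \ Finset.range N) from by
      rw [Finset.union_sdiff_of_subset (Finset.range_subset_range.mpr (Nat.min_le_right m n))]]
    rw [Finset.sum_union (Finset.disjoint_sdiff)]
    have h0 : ∑ j ∈ Finset.range n \ Finset.range N, ∑ l ∈ Finset.range m,
        σa j * σb l * rfun (Uaᴴ * Ub) (Vbᴴ * Va) j l = 0 := by
      apply Finset.sum_eq_zero
      intro j hj
      simp only [Finset.mem_sdiff, Finset.mem_range] at hj
      apply Finset.sum_eq_zero
      intro l _
      rw [hrzero j l (by omega)]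
      ring
    rw [h0, add_zero]
    apply Finset.sum_congr rfl
    intro j hj
    simp only [Finset.mem_range] at hj
    rw [show Finset.range m = Finset.range N ∪ (Finset.range m \ Finset.range N) from by
      rw [Finset.union_sdiff_of_subset (Finset.range_subset_range.mpr (Nat.min_le_left m n))]]
    rw [Finset.sum_union (Finset.disjoint_sdiff)]
    have h1 : ∑ l ∈ Finset.range m \ Finset.range N,
        σa j * σb l * rfun (Uaᴴ * Ub) (Vbᴴ * Va) j l = 0 := by
      apply Finset.sum_eq_zero
      intro l hl
      simp only [Finset.mem_sdiff, Finset.mem_range] at hl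
      rw [hrzero j l (by omega)]
      ring
    rw [h1, add_zero]
  rw [hTr]
  calc ∑ j ∈ Finset.range N, ∑ l ∈ Finset.range N,
        σa j * σb l * rfun (Uaᴴ * Ub) (Vbᴴ * Va) j l
      ≤ ∑ j ∈ Finset.range N, ∑ l ∈ Finset.range N,
        σa j * σb l * mfun (Uaᴴ * Ub) (Vbᴴ * Va) j l := by
        apply Finset.sum_le_sum; intro j _
        apply Finset.sum_le_sum; intro l _
        exact mul_le_mul_of_nonneg_left (r_le_m _ _ j l)
          (mul_nonneg (hσa0 j) (hσb0 l))
    _ ≤ ∑ i ∈ Finset.range N, σa i * σb i :=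
        substochastic_sum_le N σa σb (fun j l => mfun (Uaᴴ * Ub) (Vbᴴ * Va) j l)
          hσa0 hσa hσb0 hσb (fun j l => m_nonneg _ _ j l)
          (fun j hj => row_bound _ _ hP1 hQ2 j hj)
          (fun l hl => col_bound _ _ hP2 hQ1 l hl)
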